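/- Let S, I be an SIR solution with initial data (x, y), where x ≥ 0 and y ≥ μ. Then u(x, y) ≤ (x + y)/(γ μ). -/

import Mathlib

/-!
Before time `u` the infected population stays above `μ`, so the total population `S + I`, whose
derivative is `-γ I`, drops at rate at least `γ μ`. It cannot become negative: `S` and `I` solve
the linear equations `S' = (-β I) S` and `I' = (β S - γ) I` with nonnegative initial values, so
`γ μ u ≤ x + y`.
-/

open Set

/-- An SIR solution with parameters β, γ and initial data (x, y):
differentiable functions S, I on [0,∞) with S' = -βSI, I' = βSI - γI,
S(0) = x, I(0) = y. -/
def IsSIRSolution (β γ x y : ℝ) (S I : ℝ → ℝ) : Prop :=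
  S 0 = x ∧ I 0 = y ∧
  ∀ t, 0 ≤ t →
    HasDerivWithinAt S (-(β * S t * I t)) (Set.Ici 0) t ∧
    HasDerivWithinAt I (β * S t * I t - γ * I t) (Set.Ici 0) t

/-- If `f` became negative it would vanish at an earlier time, and Grönwall's inequality
`|f'| ≤ (sup |c|) |f|` would then keep it at `0`. -/
theorem nonneg_of_hasDerivWithinAt_mul_self {f c : ℝ → ℝ} {a b : ℝ}
    (hf : ContinuousOn f (Icc a b)) (hc : ContinuousOn c (Icc a b))
    (hf' : ∀ t ∈ Ico a b, HasDerivWithinAt f (c t * f t) (Ici t) t) (ha : 0 ≤ f a) :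
    ∀ t ∈ Icc a b, 0 ≤ f t := by
  obtain ⟨K, hK⟩ := isCompact_Icc.exists_bound_of_continuousOn hc
  intro t ht
  by_contra! hneg
  obtain ⟨s, hs, hfs⟩ : (0 : ℝ) ∈ f '' Icc a t :=
    intermediate_value_Icc' ht.1 (hf.mono (Icc_subset_Icc_right ht.2)) ⟨hneg.le, ha⟩
  have hsub : Icc s t ⊆ Icc a b := Icc_subset_Icc hs.1 ht.2
  have hzero := eq_zero_of_abs_deriv_le_mul_abs_self_of_eq_zero_right (K := K)
    (hf.mono hsub) (fun r hr => hf' r ⟨hs.1.trans hr.1, hr.2.trans_le ht.2⟩) hfs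
    (fun r hr => by
      rw [norm_mul]
      exact mul_le_mul_of_nonneg_right (hK r (hsub (Ico_subset_Icc_self hr))) (norm_nonneg _))
    t ⟨hs.2, le_rfl⟩
  exact hneg.ne hzero

namespace IsSIRSolution

variable {β γ x y : ℝ} {S I : ℝ → ℝ}

theorem continuousOn_S (h : IsSIRSolution β γ x y S I) : ContinuousOn S (Ici 0) :=
  fun t ht => (h.2.2 t ht).1.continuousWithinAt

theorem continuousOn_I (h : IsSIRSolution β γ x y S I) : ContinuousOn I (Ici 0) :=
  fun t ht => (h.2.2 t ht).2.continuousWithinAt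

theorem S_nonneg (h : IsSIRSolution β γ x y S I) (hx : 0 ≤ x) {t : ℝ} (ht : 0 ≤ t) :
    0 ≤ S t :=
  nonneg_of_hasDerivWithinAt_mul_self (c := fun s => -(β * I s))
    (h.continuousOn_S.mono Icc_subset_Ici_self)
    ((continuousOn_const.mul (h.continuousOn_I.mono Icc_subset_Ici_self)).neg)
    (fun s hs => ((h.2.2 s hs.1).1.mono (Ici_subset_Ici.2 hs.1)).congr_deriv (by ring))
    (h.1 ▸ hx) t ⟨ht, le_rfl⟩

theorem I_nonneg (h : IsSIRSolution β γ x y S I) (hy : 0 ≤ y) {t : ℝ} (ht : 0 ≤ t) :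
    0 ≤ I t :=
  nonneg_of_hasDerivWithinAt_mul_self (c := fun s => β * S s - γ)
    (h.continuousOn_I.mono Icc_subset_Ici_self)
    ((continuousOn_const.mul (h.continuousOn_S.mono Icc_subset_Ici_self)).sub continuousOn_const)
    (fun s hs => ((h.2.2 s hs.1).2.mono (Ici_subset_Ici.2 hs.1)).congr_deriv (by ring))
    (h.2.1 ▸ hy) t ⟨ht, le_rfl⟩

/-- `(S + I)' = -γ I ≤ -γ μ` while `I ≥ μ`. -/
theorem S_add_I_le_of_le_I (h : IsSIRSolution β γ x y S I) (hγ : 0 ≤ γ) {μ u : ℝ}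
    (hu : 0 ≤ u) (hI : ∀ t ∈ Ioo 0 u, μ ≤ I t) :
    S u + I u ≤ x + y - γ * μ * u := by
  have hanti : AntitoneOn (fun t => S t + I t + γ * μ * t) (Icc 0 u) := by
    refine antitoneOn_of_hasDerivWithinAt_nonpos (f' := fun t => γ * μ - γ * I t) (convex_Icc 0 u)
      (((h.continuousOn_S.add h.continuousOn_I).mono Icc_subset_Ici_self).add
        (continuousOn_const.mul continuousOn_id)) (fun t ht => ?_) (fun t ht => ?_)
    · rw [interior_Icc] at ht ⊢
      have hmono : Ioo 0 u ⊆ Ici 0 := Ioo_subset_Icc_self.trans Icc_subset_Ici_self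
      have hS' := (h.2.2 t ht.1.le).1.mono hmono
      have hI' := (h.2.2 t ht.1.le).2.mono hmono
      exact ((hS'.add hI').add ((hasDerivWithinAt_id t _).const_mul (γ * μ))).congr_deriv (by ring)
    · rw [interior_Icc] at ht
      have := mul_le_mul_of_nonneg_left (hI t ht) hγ
      linarith
  have hu0 := hanti (left_mem_Icc.2 hu) (right_mem_Icc.2 hu) hu
  simp only [h.1, h.2.1, mul_zero, add_zero] at hu0
  linarith

end IsSIRSolution

theorem stmt_3_general (β γ μ x y : ℝ) (hγ : 0 < γ) (hμ : 0 < μ)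
    (hx : 0 ≤ x) (hy : μ ≤ y)
    (S I : ℝ → ℝ) (hSI : IsSIRSolution β γ x y S I)
    (u : ℝ) (hu : IsLeast {t : ℝ | 0 ≤ t ∧ I t ≤ μ} u) :
    u ≤ (x + y) / (γ * μ) := by
  obtain ⟨⟨hu0, -⟩, hleast⟩ := hu
  have hI : ∀ t ∈ Ioo 0 u, μ ≤ I t := fun t ht => by
    by_contra! hlt
    exact (hleast ⟨ht.1.le, hlt.le⟩).not_gt ht.2
  have hdecay := hSI.S_add_I_le_of_le_I hγ.le hu0 hI
  have hS := hSI.S_nonneg hx hu0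
  have hIu := hSI.I_nonneg (hμ.le.trans hy) hu0
  rw [le_div_iff₀ (mul_pos hγ hμ)]
  linarith

theorem stmt_3 (β γ μ x y : ℝ) (hβ : 0 < β) (hγ : 0 < γ) (hμ : 0 < μ)
    (hx : 0 ≤ x) (hy : μ ≤ y)
    (S I : ℝ → ℝ) (hSI : IsSIRSolution β γ x y S I)
    (u : ℝ) (hu : IsLeast {t : ℝ | 0 ≤ t ∧ I t ≤ μ} u) :
    u ≤ (x + y) / (γ * μ) :=
  stmt_3_general β γ μ x y hγ hμ hx hy S I hSI u hu
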